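/- arXiv:1412.1298 — 6 statements merged into one kernel-verified Lean document; each statement's English description precedes it below -/
import Mathlib

section
/- Let U : [b_min, b_max] → ℝ be concave, let k ≥ e ≥ 0, let b̲ be a maximizer of z ↦ U(z) - k z over [b_min, b_max] and b̄ a maximizer of z ↦ U(z) - e z over [b_min, b_max] with b̲ ≤ b̄. Then for any x ∈ [b_min, b̲), the value max( max_{z ∈ [x, b_max]} (U(z) - k z + k x), max_{z ∈ [b_min, x]} (U(z) - e z + e x) ) is attained at z = b̲ (in the first inner problem), i.e. injecting up to b̲ is optimal when the storage level is below b̲. -/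
/-- with concave continuation value `U`, ask price `k ≥ e ≥ 0`, and
maximizers `bl ≤ bu` of `U z - k z` and `U z - e z` on `[bmin, bmax]`, for any storage
level `x ∈ [bmin, bl)` the overall one-stage value
`max( max_{z ∈ [x,bmax]} (U z - k z + k x), max_{z ∈ [bmin,x]} (U z - e z + e x) )`
is attained at `z = bl` in the first inner problem: injecting up to `bl` is optimal. -/
theorem stmt3 (bmin bmax k e : ℝ) (hb : bmin ≤ bmax) (hke : e ≤ k) (he : 0 ≤ e)
    (U : ℝ → ℝ) (hU : ConcaveOn ℝ (Set.Icc bmin bmax) U)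
    (bl bu : ℝ) (hbl : bl ∈ Set.Icc bmin bmax) (hbu : bu ∈ Set.Icc bmin bmax)
    (hblu : bl ≤ bu)
    (hblmax : ∀ z ∈ Set.Icc bmin bmax, U z - k * z ≤ U bl - k * bl)
    (hbumax : ∀ z ∈ Set.Icc bmin bmax, U z - e * z ≤ U bu - e * bu)
    (x : ℝ) (hx : bmin ≤ x) (hxbl : x < bl) :
    bl ∈ Set.Icc x bmax ∧
    (∀ z ∈ Set.Icc x bmax, U z - k * z + k * x ≤ U bl - k * bl + k * x) ∧
    (∀ z ∈ Set.Icc bmin x, U z - e * z + e * x ≤ U bl - k * bl + k * x) := by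
  obtain ⟨h1, h2⟩ := hbl
  refine ⟨⟨le_of_lt hxbl, h2⟩, ?_, ?_⟩
  · intro z hz
    have : z ∈ Set.Icc bmin bmax := ⟨le_trans hx hz.1, hz.2⟩
    have := hblmax z this
    linarith
  · intro z hz
    have hk := hblmax z ⟨hz.1, le_trans hz.2 (hxbl.le.trans h2)⟩
    nlinarith [mul_nonneg (sub_nonneg.2 hke) (sub_nonneg.2 hz.2)]
end

section
/- Let U : [b_min, b_max] → ℝ be concave, let k ≥ e ≥ 0, and let b̲ ≤ b̄ be maximizers of z ↦ U(z) - kz and z ↦ U(z) - ez respectively over [b_min, b_max]. Then for any x ∈ [b̲, b̄], z = x maximizes both z ↦ U(z) - kz over [x, b_max] and z ↦ U(z) - ez over [b_min, x]; hence doing nothing (z = x) is optimal for x in the band [b̲, b̄]. -/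
/-- with concave continuation value `U`, `k ≥ e ≥ 0`, and maximizers
`bl ≤ bu` of `U z - k z` and `U z - e z` on `[bmin, bmax]`, for every `x ∈ [bl, bu]`
the point `z = x` maximizes both `z ↦ U z - k z` over `[x, bmax]` and
`z ↦ U z - e z` over `[bmin, x]`: doing nothing is optimal in the band `[bl, bu]`. -/
theorem stmt4 (bmin bmax k e : ℝ) (hb : bmin ≤ bmax) (hke : e ≤ k) (he : 0 ≤ e)
    (U : ℝ → ℝ) (hU : ConcaveOn ℝ (Set.Icc bmin bmax) U)
    (bl bu : ℝ) (hbl : bl ∈ Set.Icc bmin bmax) (hbu : bu ∈ Set.Icc bmin bmax)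
    (hblu : bl ≤ bu)
    (hblmax : ∀ z ∈ Set.Icc bmin bmax, U z - k * z ≤ U bl - k * bl)
    (hbumax : ∀ z ∈ Set.Icc bmin bmax, U z - e * z ≤ U bu - e * bu)
    (x : ℝ) (hxl : bl ≤ x) (hxu : x ≤ bu) :
    (∀ z ∈ Set.Icc x bmax, U z - k * z ≤ U x - k * x) ∧
    (∀ z ∈ Set.Icc bmin x, U z - e * z ≤ U x - e * x) := by
  have hxmem : x ∈ Set.Icc bmin bmax :=
    ⟨le_trans hbl.1 hxl, le_trans hxu hbu.2⟩
  constructor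
  · intro z hz
    rcases eq_or_lt_of_le hz.1 with h | h
    · rw [← h]
    · have hzmem : z ∈ Set.Icc bmin bmax :=
        ⟨le_trans hxmem.1 hz.1, hz.2⟩
      have hbz : bl < z := lt_of_le_of_lt hxl h
      set t := (x - bl) / (z - bl) with ht
      have hne : z - bl ≠ 0 := ne_of_gt (by linarith)
      have ht0 : 0 ≤ t := div_nonneg (by linarith) (by linarith)
      have ht1 : t ≤ 1 := div_le_one_of_le₀ (by linarith) (by linarith)
      have hx : (1 - t) * bl + t * z = x := by
        field_simp [ht]
        have hmul : t * (z - bl) = x - bl := by rw [ht]; exact div_mul_cancel₀ _ hne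
        linear_combination hmul
      have hc := hU.2 hbl hzmem (by linarith : (0:ℝ) ≤ 1 - t) ht0 (by ring)
      simp only [smul_eq_mul] at hc
      rw [hx] at hc
      have hmax := hblmax z hzmem
      nlinarith [mul_nonneg (by linarith : (0:ℝ) ≤ 1 - t)
        (by linarith : (0:ℝ) ≤ U bl - k * bl - (U z - k * z))]
  · intro z hz
    rcases eq_or_lt_of_le hz.2 with h | h
    · rw [h]
    · have hzmem : z ∈ Set.Icc bmin bmax :=
        ⟨hz.1, le_trans hz.2 hxmem.2⟩
      have hbz : z < bu := lt_of_lt_of_le h hxu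
      set t := (x - z) / (bu - z) with ht
      have hne : bu - z ≠ 0 := ne_of_gt (by linarith)
      have ht0 : 0 ≤ t := div_nonneg (by linarith) (by linarith)
      have ht1 : t ≤ 1 := div_le_one_of_le₀ (by linarith) (by linarith)
      have hx : (1 - t) * z + t * bu = x := by
        field_simp [ht]
        have hmul : t * (bu - z) = x - z := by rw [ht]; exact div_mul_cancel₀ _ hne
        linear_combination hmul
      have hc := hU.2 hzmem hbu (by linarith : (0:ℝ) ≤ 1 - t) ht0 (by ring)
      simp only [smul_eq_mul] at hc
      rw [hx] at hc
      have hmax := hbumax z hzmem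
      nlinarith [mul_nonneg ht0
        (by linarith : (0:ℝ) ≤ U bu - e * bu - (U z - e * z))]
end

section
/- Structure of the optimal policy: for each stage n there exist thresholds b̲_n(p,r) ≤ b̄_n(p,r) (depending on price p and regime r) such that the decision rule f*_n(x,p,r) = min(b̲_n(p,r) - x, i_n^max(x)) if b_min ≤ x < b̲_n(p,r); = 0 if b̲_n(p,r) ≤ x ≤ b̄_n(p,r); = max(b̄_n(p,r) - x, i_n^min(x)) if b̄_n(p,r) < x ≤ b_max, maximizes a ↦ h(p,a) + U_n(x+a, p, r) over the admissible set D_n(x), where U_n(·,p,r) is concave. In particular, with z = x + a, the maximizer z*(x,p,r) of z ↦ h(p, z-x) + U_n(z,p,r) over [max(i_n^min(x)+x, b_min), min(b_max, i_n^max(x)+x)] equals min(b̲_n(p,r), i_n^max(x)+x) for x < b̲_n, equals x for x ∈ [b̲_n, b̄_n], and equals max(b̄_n(p,r), i_n^min(x)+x) for x > b̄_n. -/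
/-!
To the right of `x` the objective is `U z - k z + k x`, to the left it is `U z - e z + e x`. Each
piece is concave with its maximum over `[bmin, bmax]` at `bl`, resp. `bu`, and on a subinterval
such a function is maximized at the point closest to its peak. So on the feasible part right of
`x` the objective peaks at the projection of `bl`, on the part left of `x` at the projection of
`bu`. Since `bl ≤ bu`, one of these projections is `x` itself, which lies in both parts, and the
other one is `z*`.
-/

open Set

theorem ConcaveOn.isMaxOn_Icc_max_min {S : Set ℝ} {φ : ℝ → ℝ} (hφ : ConcaveOn ℝ S φ) {m : ℝ}
    (hm : m ∈ S) (hmax : IsMaxOn φ S m) {a b : ℝ} (hS : Icc a b ⊆ S) :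
    IsMaxOn φ (Icc a b) (max a (min b m)) := by
  intro z hz
  have hbetween : max a (min b m) ∈ segment ℝ z m := by
    rw [segment_eq_uIcc, mem_uIcc]
    grind
  calc φ z = min (φ z) (φ m) := (min_eq_left (hmax (hS hz))).symm
    _ ≤ φ (max a (min b m)) := hφ.ge_on_segment (hS hz) hm hbetween

theorem ConcaveOn.isMaxOn_Icc_of_eqOn_sub_mul_add {S : Set ℝ} {U g : ℝ → ℝ}
    (hU : ConcaveOn ℝ S U) {c d m : ℝ} (hm : m ∈ S) (hmax : ∀ z ∈ S, U z - c * z ≤ U m - c * m)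
    {a b : ℝ} (hab : a ≤ b) (hS : Icc a b ⊆ S) (hg : EqOn g (fun z => U z - c * z + d) (Icc a b)) :
    IsMaxOn g (Icc a b) (max a (min b m)) := by
  have hψ := (hU.sub ((LinearMap.mul ℝ ℝ c).convexOn hU.1)).isMaxOn_Icc_max_min hm hmax hS
  refine isMaxOn_iff.2 fun z hz => ?_
  rw [hg hz, hg ⟨le_max_left _ _, max_le hab (min_le_left _ _)⟩]
  simpa using hψ hz

theorem IsMaxOn.of_Icc_union {g : ℝ → ℝ} {L x R p q c : ℝ} (hL : L ≤ x) (hR : x ≤ R)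
    (hp : IsMaxOn g (Icc L x) p) (hq : IsMaxOn g (Icc x R) q) (hpc : g p ≤ g c)
    (hqc : g q ≤ g c) : IsMaxOn g (Icc L R) c := by
  rw [← Icc_union_Icc_eq_Icc hL hR]
  rintro z (hz | hz)
  exacts [(hp hz).trans hpc, (hq hz).trans hqc]

theorem stmt6_general (bmin bmax k e : ℝ)
    (U : ℝ → ℝ) (hU : ConcaveOn ℝ (Set.Icc bmin bmax) U)
    (imin imax : ℝ → ℝ)
    (himin : ∀ x ∈ Set.Icc bmin bmax, imin x ≤ 0)
    (himax : ∀ x ∈ Set.Icc bmin bmax, 0 ≤ imax x)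
    (h : ℝ → ℝ) (hh : ∀ a, h a = if 0 < a then -(k * a) else if a < 0 then -(e * a) else 0)
    (bl bu : ℝ) (hbl : bl ∈ Set.Icc bmin bmax) (hbu : bu ∈ Set.Icc bmin bmax)
    (hblu : bl ≤ bu)
    (hblmax : ∀ z ∈ Set.Icc bmin bmax, U z - k * z ≤ U bl - k * bl)
    (hbumax : ∀ z ∈ Set.Icc bmin bmax, U z - e * z ≤ U bu - e * bu)
    (x : ℝ) (hx : x ∈ Set.Icc bmin bmax)
    (zstar : ℝ)
    (hzstar : zstar = if x < bl then min bl (imax x + x)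
        else if x ≤ bu then x else max bu (imin x + x)) :
    zstar ∈ Set.Icc (max (imin x + x) bmin) (min bmax (imax x + x)) ∧
    ∀ z ∈ Set.Icc (max (imin x + x) bmin) (min bmax (imax x + x)),
      h (z - x) + U z ≤ h (zstar - x) + U zstar := by
  set L := max (imin x + x) bmin
  set R := min bmax (imax x + x)
  set g := fun z => h (z - x) + U z
  have hL : L ≤ x := max_le (by linarith [himin x hx]) hx.1
  have hR : x ≤ R := le_min hx.2 (by linarith [himax x hx])
  have hLR : Icc L R ⊆ Icc bmin bmax := Icc_subset_Icc (le_max_right _ _) (min_le_left _ _)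
  have hright : EqOn g (fun z => U z - k * z + k * x) (Icc x R) := fun z hz => by
    simp only [g, hh]; split_ifs <;> grind
  have hleft : EqOn g (fun z => U z - e * z + e * x) (Icc L x) := fun z hz => by
    simp only [g, hh]; split_ifs <;> grind
  have hpk := hU.isMaxOn_Icc_of_eqOn_sub_mul_add hbl hblmax hR
    ((Icc_subset_Icc_left hL).trans hLR) hright
  have hpe := hU.isMaxOn_Icc_of_eqOn_sub_mul_add hbu hbumax hL
    ((Icc_subset_Icc_right hR).trans hLR) hleft
  rcases le_or_gt x bu with hxbu | hbux
  · have hzk : zstar = max x (min R bl) := by grind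
    have hpex : max L (min x bu) = x := by grind
    refine ⟨hzk ▸ ⟨hL.trans (le_max_left _ _), max_le hR (min_le_left _ _)⟩, ?_⟩
    rw [hzk, ← isMaxOn_iff]
    exact hpe.of_Icc_union hL hR hpk (by rw [hpex]; exact hpk ⟨le_rfl, hR⟩) le_rfl
  · have hze : zstar = max L (min x bu) := by grind
    have hpkx : max x (min R bl) = x := by grind
    refine ⟨hze ▸ ⟨le_max_left _ _, (max_le hL (min_le_left _ _)).trans hR⟩, ?_⟩
    rw [hze, ← isMaxOn_iff]
    exact hpe.of_Icc_union hL hR hpk le_rfl (by rw [hpkx]; exact hpe ⟨hL, le_rfl⟩)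

/-- structure of the optimal policy: with concave continuation value `U`,
prices `k ≥ e ≥ 0`, thresholds `bl ≤ bu` maximizing `U z - k z` resp. `U z - e z` on
`[bmin, bmax]`, rates `imin x ≤ 0 ≤ imax x`, and one-stage reward
`h a = -k a` for `a > 0`, `-e a` for `a < 0`, `0` for `a = 0`, the target level
`z* = min bl (imax x + x)` for `x < bl`, `z* = x` for `x ∈ [bl, bu]`, and
`z* = max bu (imin x + x)` for `x > bu` maximizes `z ↦ h (z - x) + U z` over the
feasible set `[max (imin x + x) bmin, min bmax (imax x + x)]`. -/
theorem stmt6 (bmin bmax k e : ℝ) (hb : bmin ≤ bmax) (hke : e ≤ k) (he : 0 ≤ e)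
    (U : ℝ → ℝ) (hU : ConcaveOn ℝ (Set.Icc bmin bmax) U)
    (imin imax : ℝ → ℝ)
    (himin : ∀ x ∈ Set.Icc bmin bmax, imin x ≤ 0)
    (himax : ∀ x ∈ Set.Icc bmin bmax, 0 ≤ imax x)
    (h : ℝ → ℝ) (hh : ∀ a, h a = if 0 < a then -(k * a) else if a < 0 then -(e * a) else 0)
    (bl bu : ℝ) (hbl : bl ∈ Set.Icc bmin bmax) (hbu : bu ∈ Set.Icc bmin bmax)
    (hblu : bl ≤ bu)
    (hblmax : ∀ z ∈ Set.Icc bmin bmax, U z - k * z ≤ U bl - k * bl)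
    (hbumax : ∀ z ∈ Set.Icc bmin bmax, U z - e * z ≤ U bu - e * bu)
    (x : ℝ) (hx : x ∈ Set.Icc bmin bmax)
    (zstar : ℝ)
    (hzstar : zstar = if x < bl then min bl (imax x + x)
        else if x ≤ bu then x else max bu (imin x + x)) :
    zstar ∈ Set.Icc (max (imin x + x) bmin) (min bmax (imax x + x)) ∧
    ∀ z ∈ Set.Icc (max (imin x + x) bmin) (min bmax (imax x + x)),
      h (z - x) + U z ≤ h (zstar - x) + U zstar :=
  stmt6_general bmin bmax k e U hU imin imax himin himax h hh bl bu hbl hbu hblu hblmax hbumax x hx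
    zstar hzstar
end

section
/- In the fast-storage special case (affine rate constraints, affine terminal reward), an optimal decision rule at stage n-1 is of bang-bang type: f*_{n-1}(x,p,r) = i_{n-1}^min(x) if γ¹_{n-1}(p,r) < 0, = 0 if γ²_{n-1}(p,r) ≤ 0 ≤ γ¹_{n-1}(p,r), = i_{n-1}^max(x) if γ²_{n-1}(p,r) > 0, where γ¹_{n-1}(p,r) = g_{n-1}(p,r) - e(p), γ²_{n-1}(p,r) = g_{n-1}(p,r) - k(p), and g_{n-1}(p,r) = E[c_n(P_n,R_n) | P_{n-1}=p, R_{n-1}=r] is the conditional expectation of the slope of the next-stage value function; moreover γ²_{n-1}(p,r) ≤ γ¹_{n-1}(p,r). -/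
/-- bang-bang optimal decision in the fast-storage case: with
`γ¹ = g - e`, `γ² = g - k`, `e ≤ k`, `0 ≤ e`, rates `imin ≤ 0 ≤ imax` and reward
`h a = -k a` for `a > 0`, `-e a` for `a < 0`, `0` for `a = 0`, one has `γ² ≤ γ¹` and
the action `a* = imin` if `γ¹ < 0`, `a* = 0` if `γ² ≤ 0 ≤ γ¹`, `a* = imax` if `γ² > 0`
maximizes the one-stage objective `a ↦ h a + g * a` over `[imin, imax]`. -/
theorem stmt8 (k e g imin imax : ℝ) (hke : e ≤ k) (he : 0 ≤ e)
    (himin : imin ≤ 0) (himax : 0 ≤ imax)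
    (h : ℝ → ℝ) (hh : ∀ a, h a = if 0 < a then -(k * a) else if a < 0 then -(e * a) else 0)
    (astar : ℝ)
    (hastar : astar = if g - e < 0 then imin else if 0 < g - k then imax else 0) :
    g - k ≤ g - e ∧
    astar ∈ Set.Icc imin imax ∧
    ∀ a ∈ Set.Icc imin imax, h a + g * a ≤ h astar + g * astar := by
  have key : ∀ b : ℝ, h b + g * b =
      if 0 < b then (g - k) * b else if b < 0 then (g - e) * b else 0 := by
    intro b
    rw [hh b]
    split_ifs with h1 h2
    · ring
    · ring
    · have hb : b = 0 := le_antisymm (not_lt.mp h1) (not_lt.mp h2)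
      subst hb; ring
  refine ⟨by linarith, ?_, ?_⟩
  · rw [hastar]
    split_ifs <;> exact ⟨by linarith, by linarith⟩
  · intro a ⟨ha1, ha2⟩
    rw [key, key, hastar]
    split_ifs <;> nlinarith
end

section
/- Let U : [b_min, b_max] → ℝ be concave with k ≥ e ≥ 0, and b̲ ≤ b̄ the respective maximizers of U(z) - kz and U(z) - ez. For x ∈ (b̄, b_max], the value max( max_{z ∈ [x, b_max]} (U(z) - kz + kx), max_{z ∈ [b_min, x]} (U(z) - ez + ex) ) is attained at z = b̄ in the second inner problem, i.e. withdrawing down to b̄ is optimal when the storage level exceeds b̄. -/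
/-- with concave continuation value `U`, `k ≥ e ≥ 0`, and maximizers
`bl ≤ bu` of `U z - k z` resp. `U z - e z` on `[bmin, bmax]`, for `x ∈ (bu, bmax]` the
overall one-stage value
`max( max_{z ∈ [x,bmax]} (U z - k z + k x), max_{z ∈ [bmin,x]} (U z - e z + e x) )`
is attained at `z = bu` in the second inner problem: withdrawing down to `bu` is
optimal when the storage level exceeds `bu`. -/
theorem stmt17 (bmin bmax k e : ℝ) (hb : bmin ≤ bmax) (hke : e ≤ k) (he : 0 ≤ e)
    (U : ℝ → ℝ) (hU : ConcaveOn ℝ (Set.Icc bmin bmax) U)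
    (bl bu : ℝ) (hbl : bl ∈ Set.Icc bmin bmax) (hbu : bu ∈ Set.Icc bmin bmax)
    (hblu : bl ≤ bu)
    (hblmax : ∀ z ∈ Set.Icc bmin bmax, U z - k * z ≤ U bl - k * bl)
    (hbumax : ∀ z ∈ Set.Icc bmin bmax, U z - e * z ≤ U bu - e * bu)
    (x : ℝ) (hxu : bu < x) (hxmax : x ≤ bmax) :
    bu ∈ Set.Icc bmin x ∧
    (∀ z ∈ Set.Icc bmin x, U z - e * z + e * x ≤ U bu - e * bu + e * x) ∧
    (∀ z ∈ Set.Icc x bmax, U z - k * z + k * x ≤ U bu - e * bu + e * x) := by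
  refine ⟨⟨hbu.1, le_of_lt hxu⟩, ?_, ?_⟩
  · intro z hz
    have := hbumax z ⟨hz.1, le_trans hz.2 hxmax⟩
    linarith
  · intro z hz
    have hzm : z ∈ Set.Icc bmin bmax := ⟨le_trans hbu.1 (le_trans hxu.le hz.1), hz.2⟩
    have h1 := hbumax z hzm
    nlinarith [hz.1, mul_le_mul_of_nonneg_right hke (sub_nonneg.mpr hz.1)]
end

section
/- If h_N(x,p) is concave in x for each p, then by backward induction the value functions V_n(·, p, r) and the continuation values U_n(·, p, r) of the gas storage MDP are concave in the storage level x for every n ∈ {0, …, N}, price p, and regime r, where U_n(x,p,r) = β Σ_{j} q_{rj} ∫ V_{n+1}(x, p', j) Q_{n,r}(dp'|p) and V_n = T_n V_{n+1}; in particular, a nonnegative mixture and integral of concave functions of x is concave in x. -/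
open MeasureTheory

/-- backward induction: if the terminal reward `h_N(·,p)` is concave in
the storage level, the one-stage reward `h p` is concave, the admissible sets `D n ·`
have convex graph and keep the storage level in `[bmin, bmax]`, then all value functions
`V n (·,p,r)` and all continuation values
`U n (x,p,r) = β Σ_j q r j ∫ V (n+1) (x,p',j) Q_{n,r}(dp'|p)` (for `n < N`) of the gas
storage MDP are concave in the storage level on `[bmin, bmax]`. -/
theorem stmt19 {P : Type*} [MeasurableSpace P] {R : Type*} [Fintype R]
    (bmin bmax β : ℝ) (hb : bmin ≤ bmax) (hβ0 : 0 < β) (hβ1 : β ≤ 1)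
    (q : R → R → ℝ) (hq : ∀ r j, 0 ≤ q r j)
    (Q : ℕ → R → P → Measure P) (N : ℕ)
    (h : P → ℝ → ℝ) (hh : ∀ p, ConcaveOn ℝ Set.univ (h p))
    (D : ℕ → ℝ → Set ℝ)
    (hD : ∀ (n : ℕ) (x1 x2 a1 a2 α : ℝ), α ∈ Set.Icc (0:ℝ) 1 →
        a1 ∈ D n x1 → a2 ∈ D n x2 →
        α * a1 + (1 - α) * a2 ∈ D n (α * x1 + (1 - α) * x2))
    (hDx : ∀ n, ∀ x ∈ Set.Icc bmin bmax, ∀ a ∈ D n x, x + a ∈ Set.Icc bmin bmax)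
    (hN : ℝ → P → ℝ) (hhN : ∀ p, ConcaveOn ℝ (Set.Icc bmin bmax) (fun x => hN x p))
    (V U : ℕ → ℝ → P → R → ℝ)
    (hint : ∀ n, n < N → ∀ (x : ℝ) (p : P) (r : R) (j : R),
        Integrable (fun p' => V (n + 1) x p' j) (Q n r p))
    (hU : ∀ n, n < N → ∀ (x : ℝ) (p : P) (r : R),
        U n x p r = β * ∑ j, q r j * ∫ p', V (n + 1) x p' j ∂(Q n r p))
    (hterm : ∀ (x : ℝ) (p : P) (r : R), V N x p r = hN x p)
    (hbell : ∀ n, n < N → ∀ (p : P) (r : R), ∀ x ∈ Set.Icc bmin bmax,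
        IsLUB ((fun a => h p a + U n (x + a) p r) '' D n x) (V n x p r)) :
    ∀ n ≤ N, ∀ (p : P) (r : R),
      ConcaveOn ℝ (Set.Icc bmin bmax) (fun x => V n x p r) ∧
      (n < N → ConcaveOn ℝ (Set.Icc bmin bmax) (fun x => U n x p r)) := by

  -- Step 1: concavity of U n given concavity of V (n+1)
  have hUconc : ∀ n, n < N →
      (∀ (p : P) (j : R), ConcaveOn ℝ (Set.Icc bmin bmax) (fun x => V (n + 1) x p j)) →
      ∀ (p : P) (r : R), ConcaveOn ℝ (Set.Icc bmin bmax) (fun x => U n x p r) := by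
    intro n hn hV1 p r
    refine ⟨convex_Icc _ _, ?_⟩
    intro x hx y hy a b ha hb hab
    simp only [smul_eq_mul]
    rw [hU n hn, hU n hn, hU n hn]
    have hsum : ∀ j : R,
        a * ∫ p', V (n + 1) x p' j ∂(Q n r p) + b * ∫ p', V (n + 1) y p' j ∂(Q n r p)
          ≤ ∫ p', V (n + 1) (a * x + b * y) p' j ∂(Q n r p) := by
      intro j
      have hi1 := hint n hn x p r j
      have hi2 := hint n hn y p r j
      have hic := hint n hn (a * x + b * y) p r j
      have hle : ∀ p', a * V (n + 1) x p' j + b * V (n + 1) y p' j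
          ≤ V (n + 1) (a * x + b * y) p' j := by
        intro p'
        have := (hV1 p' j).2 hx hy ha hb hab
        simpa [smul_eq_mul] using this
      calc a * ∫ p', V (n + 1) x p' j ∂(Q n r p) + b * ∫ p', V (n + 1) y p' j ∂(Q n r p)
          = ∫ p', (a * V (n + 1) x p' j + b * V (n + 1) y p' j) ∂(Q n r p) := by
            rw [MeasureTheory.integral_add (hi1.const_mul a) (hi2.const_mul b),
              integral_const_mul, integral_const_mul]
        _ ≤ _ := MeasureTheory.integral_mono ((hi1.const_mul a).add (hi2.const_mul b)) hic hle
    have key : a * (β * ∑ j, q r j * ∫ p', V (n + 1) x p' j ∂(Q n r p))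
        + b * (β * ∑ j, q r j * ∫ p', V (n + 1) y p' j ∂(Q n r p))
        = β * ∑ j, q r j * (a * ∫ p', V (n + 1) x p' j ∂(Q n r p)
            + b * ∫ p', V (n + 1) y p' j ∂(Q n r p)) := by
      rw [Finset.mul_sum, Finset.mul_sum, Finset.mul_sum, Finset.mul_sum, Finset.mul_sum,
        ← Finset.sum_add_distrib]
      exact Finset.sum_congr rfl (fun j _ => by ring)
    rw [key]
    refine mul_le_mul_of_nonneg_left ?_ hβ0.le
    exact Finset.sum_le_sum fun j _ => mul_le_mul_of_nonneg_left (hsum j) (hq r j)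
  -- Step 2: concavity of V n given concavity of U n
  have hVconc : ∀ n, n < N →
      (∀ (p : P) (r : R), ConcaveOn ℝ (Set.Icc bmin bmax) (fun x => U n x p r)) →
      ∀ (p : P) (r : R), ConcaveOn ℝ (Set.Icc bmin bmax) (fun x => V n x p r) := by
    intro n hn hUc p r
    refine ⟨convex_Icc _ _, ?_⟩
    intro x hx y hy a b ha hb hab
    have hmem : a • x + b • y ∈ Set.Icc bmin bmax := (convex_Icc bmin bmax) hx hy ha hb hab
    simp only [smul_eq_mul] at hmem ⊢
    have hlubx := hbell n hn p r x hx
    have hluby := hbell n hn p r y hy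
    have hlubc := hbell n hn p r _ hmem
    refine le_of_forall_pos_le_add ?_
    intro ε hε
    obtain ⟨s1, hs1mem, hs1, -⟩ := hlubx.exists_between (sub_lt_self _ hε)
    obtain ⟨s2, hs2mem, hs2, -⟩ := hluby.exists_between (sub_lt_self _ hε)
    obtain ⟨a1, ha1, rfl⟩ := hs1mem
    obtain ⟨a2, ha2, rfl⟩ := hs2mem
    have hb' : (1 : ℝ) - a = b := by linarith
    have hac : a * a1 + b * a2 ∈ D n (a * x + b * y) := by
      have := hD n x y a1 a2 a ⟨ha, by linarith⟩ ha1 ha2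
      rwa [hb'] at this
    have hVcub : h p (a * a1 + b * a2) + U n ((a * x + b * y) + (a * a1 + b * a2)) p r
        ≤ V n (a * x + b * y) p r := hlubc.1 ⟨_, hac, rfl⟩
    have hhc : a * h p a1 + b * h p a2 ≤ h p (a * a1 + b * a2) := by
      have := (hh p).2 (Set.mem_univ a1) (Set.mem_univ a2) ha hb hab
      simpa [smul_eq_mul] using this
    have hxa1 : x + a1 ∈ Set.Icc bmin bmax := hDx n x hx a1 ha1
    have hya2 : y + a2 ∈ Set.Icc bmin bmax := hDx n y hy a2 ha2
    have hUc' : a * U n (x + a1) p r + b * U n (y + a2) p r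
        ≤ U n ((a * x + b * y) + (a * a1 + b * a2)) p r := by
      have heq : (a * x + b * y) + (a * a1 + b * a2) = a * (x + a1) + b * (y + a2) := by ring
      rw [heq]
      have := (hUc p r).2 hxa1 hya2 ha hb hab
      simpa [smul_eq_mul] using this
    have m1 : a * (V n x p r - ε) ≤ a * (h p a1 + U n (x + a1) p r) :=
      mul_le_mul_of_nonneg_left hs1.le ha
    have m2 : b * (V n y p r - ε) ≤ b * (h p a2 + U n (y + a2) p r) :=
      mul_le_mul_of_nonneg_left hs2.le hb
    nlinarith [hVcub, hhc, hUc', m1, m2]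
  -- Step 3: backward induction
  have main : ∀ d : ℕ, ∀ (p : P) (r : R),
      ConcaveOn ℝ (Set.Icc bmin bmax) (fun x => V (N - d) x p r) := by
    intro d
    induction d with
    | zero =>
      intro p r
      have he : (fun x => V (N - 0) x p r) = fun x => hN x p :=
        funext fun x => by simpa using hterm x p r
      rw [he]; exact hhN p
    | succ d ih =>
      intro p r
      rcases le_or_gt (d + 1) N with hdN | hdN
      · have hn : N - (d + 1) < N := by omega
        have hsucc : N - (d + 1) + 1 = N - d := by omega
        have hV1 : ∀ (p : P) (j : R),
            ConcaveOn ℝ (Set.Icc bmin bmax) (fun x => V (N - (d + 1) + 1) x p j) := by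
          intro p j; rw [hsucc]; exact ih p j
        exact hVconc _ hn (hUconc _ hn hV1) p r
      · have he : N - (d + 1) = N - d := by omega
        rw [he]; exact ih p r
  have mainAt : ∀ m, m ≤ N → ∀ (p : P) (r : R),
      ConcaveOn ℝ (Set.Icc bmin bmax) (fun x => V m x p r) := by
    intro m hm p r
    have h' : N - (N - m) = m := by omega
    have := main (N - m) p r
    rwa [h'] at this
  intro n hn p r
  exact ⟨mainAt n hn p r, fun hlt => hUconc n hlt (fun p j => mainAt (n + 1) hlt p j) p r⟩
end
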